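/- arXiv:2506.21128 — 2 statements merged into one kernel-verified Lean document; each statement's English description precedes it below -/
import Mathlib

section
/- For a metric space M the following are equivalent: (i) M is tractable and bounded; (ii) M is tractable and compact; (iii) M is positive definite, compact, and has finite magnitude mg(M) < ∞. -/
open Metric TopologicalSpace Filter Topology Bornology
open scoped ENNReal NNReal

/-- The similarity matrix of a finite subset of a metric space. -/
noncomputable def simMatrix {X : Type*} [MetricSpace X] (s : Finset X) : Matrix s s ℝ :=
  fun i j => Real.exp (-dist (i : X) (j : X))

/-- A metric space is positive definite when every finite subspace has a positive
definite similarity matrix. -/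
def IsPosDefSpace (X : Type*) [MetricSpace X] : Prop :=
  ∀ s : Finset X, (simMatrix s).PosDef

/-- The magnitude of a finite subset of a metric space: the sum of the entries of the
inverse of its similarity matrix. -/
noncomputable def finMag {X : Type*} [MetricSpace X] (s : Finset X) : ℝ :=
  letI : DecidableEq X := Classical.decEq X
  ∑ i, ∑ j, (simMatrix s)⁻¹ i j

/-- The magnitude of a (compact) subset of a metric space, valued in `[0, ∞]`:
the supremum of the magnitudes of its finite subsets. -/
noncomputable def cMagE {X : Type*} [MetricSpace X] (K : Set X) : ℝ≥0∞ :=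
  ⨆ (s : Finset X) (_ : (s : Set X) ⊆ K), ENNReal.ofReal (finMag s)

/-- The real-valued magnitude of a (compact) subset of a metric space. -/
noncomputable def cMag {X : Type*} [MetricSpace X] (K : Set X) : ℝ :=
  (cMagE K).toReal

/-- A metric space is tractable when it is positive definite and all of its closed balls
are compact and of finite magnitude. -/
def Tractable (X : Type*) [MetricSpace X] : Prop :=
  IsPosDefSpace X ∧ (∀ (x : X) (r : ℝ), IsCompact (closedBall x r)) ∧
    ∀ (x : X) (r : ℝ), cMagE (closedBall x r) < ⊤

section

variable {X : Type*} [MetricSpace X]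

lemma cMagE_mono {K K' : Set X} (h : K ⊆ K') : cMagE K ≤ cMagE K' :=
  iSup₂_le fun s hs => le_iSup₂_of_le s (hs.trans h) le_rfl

lemma cMagE_empty : cMagE (∅ : Set X) = 0 := by
  refine le_antisymm (iSup₂_le fun s hs => ?_) bot_le
  rw [Set.subset_empty_iff, Finset.coe_eq_empty] at hs
  subst hs
  simp [finMag]

lemma Tractable.properSpace (hT : Tractable X) : ProperSpace X :=
  ⟨hT.2.1⟩

lemma Tractable.cMagE_lt_top_of_isBounded (hT : Tractable X) {K : Set X} (hK : IsBounded K) :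
    cMagE K < ⊤ := by
  rcases K.eq_empty_or_nonempty with rfl | ⟨x, -⟩
  · simp [cMagE_empty]
  · obtain ⟨r, hr⟩ := hK.subset_closedBall x
    exact (cMagE_mono hr).trans_lt (hT.2.2 x r)

lemma tractable_of_compactSpace [CompactSpace X] (hP : IsPosDefSpace X)
    (hM : cMagE (Set.univ : Set X) < ⊤) : Tractable X :=
  ⟨hP, fun _ _ => isClosed_closedBall.isCompact,
    fun _ _ => (cMagE_mono (Set.subset_univ _)).trans_lt hM⟩

end

/-- For a metric space `M`, the following are equivalent: (i) `M` is
tractable and bounded; (ii) `M` is tractable and compact; (iii) `M` is positive definite,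
compact and of finite magnitude. -/
theorem stmt_5 (M : Type*) [MetricSpace M] :
    ((Tractable M ∧ IsBounded (Set.univ : Set M)) ↔ (Tractable M ∧ CompactSpace M)) ∧
    ((Tractable M ∧ CompactSpace M) ↔
      (IsPosDefSpace M ∧ CompactSpace M ∧ cMagE (Set.univ : Set M) < ⊤)) := by
  refine ⟨and_congr_right fun hT => ?_, ⟨?_, ?_⟩⟩
  · have := hT.properSpace
    exact compactSpace_iff_isBounded_univ.symm
  · rintro ⟨hT, hC⟩
    exact ⟨hT.1, hC, hT.cMagE_lt_top_of_isBounded isCompact_univ.isBounded⟩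
  · rintro ⟨hP, hC, hM⟩
    exact ⟨tractable_of_compactSpace hP hM, hC⟩
end

section
/- For every nonempty finite set A ⊆ ℝ and every r ≥ 0, the magnitude of the closed r-thickening of A satisfies mg({ x ∈ ℝ : dist(x, A) ≤ r }) − mg(A) ≤ r · (1 + (max A − min A)/2). -/
/-!
For points `a₀ < ⋯ < aₙ` of `ℝ` the kernel `exp (-|s - t|)` is Markov:
`exp (-|a - c|) = exp (-|a - b|) * exp (-|b - c|)` for `a ≤ b ≤ c`. Adding the points one at a
time from the left therefore gives an explicit weighting and an invertible similarity matrix,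
whence `mg = 1 + ∑ tanh (gapᵢ / 2)`.

Given a finite `F` in the `r`-thickening of `A`, a monotone map `p` into `A` that moves points
of the thickening by at most `r` sends `F` to a finite subset of `A`. Since `x ↦ x - tanh x` is
increasing with derivative `tanh² x ≤ min 1 x` on `x ≥ 0`, a half-gap `s` of `F` and the
corresponding half-gap `t` of `p F` satisfy `tanh s ≤ tanh t + (s - t) + r t`; summing, the
`s - t` terms telescope to at most `r` and the `r t` terms to at most `r (max A - min A) / 2`.
-/

open Metric TopologicalSpace Filter Topology Bornology
open scoped ENNReal NNReal

open Real

namespace Real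

theorem hasDerivAt_tanh (x : ℝ) : HasDerivAt tanh (1 - tanh x ^ 2) x := by
  have e : sinh / cosh = tanh := funext fun y => (tanh_eq_sinh_div_cosh y).symm
  have h := (hasDerivAt_sinh x).div (hasDerivAt_cosh x) (cosh_pos x).ne'
  rw [e] at h
  refine h.congr_deriv ?_
  rw [tanh_eq_sinh_div_cosh]
  field_simp

theorem tanh_strictMono : StrictMono tanh :=
  strictMono_of_deriv_pos fun x => by
    rw [(hasDerivAt_tanh x).deriv]; linarith [tanh_sq_lt_one x]

theorem tanh_nonneg {x : ℝ} (hx : 0 ≤ x) : 0 ≤ tanh x := by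
  simpa using tanh_strictMono.monotone hx

theorem hasDerivAt_id_sub_tanh (x : ℝ) : HasDerivAt (fun y => y - tanh y) (tanh x ^ 2) x :=
  ((hasDerivAt_id' x).sub (hasDerivAt_tanh x)).congr_deriv (by ring)

theorem monotone_id_sub_tanh : Monotone fun x => x - tanh x :=
  monotone_of_deriv_nonneg (fun x => (hasDerivAt_id_sub_tanh x).differentiableAt)
    fun x => (hasDerivAt_id_sub_tanh x).deriv ▸ sq_nonneg _

theorem tanh_le_self {x : ℝ} (hx : 0 ≤ x) : tanh x ≤ x := by
  simpa using monotone_id_sub_tanh hx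

theorem sub_tanh_sub_sub_tanh_le {s t : ℝ} (hs : 0 ≤ s) (hst : s ≤ t) :
    (t - tanh t) - (s - tanh s) ≤ tanh t ^ 2 * (t - s) := by
  refine (convex_Icc s t).image_sub_le_mul_sub_of_deriv_le
    (fun y _ => (hasDerivAt_id_sub_tanh y).continuousAt.continuousWithinAt)
    (fun y _ => (hasDerivAt_id_sub_tanh y).differentiableAt.differentiableWithinAt)
    (fun y hy => ?_) s (Set.left_mem_Icc.2 hst) t (Set.right_mem_Icc.2 hst) hst
  rw [interior_Icc] at hy
  rw [(hasDerivAt_id_sub_tanh y).deriv]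
  have h0 : 0 ≤ tanh y := tanh_nonneg (hs.trans hy.1.le)
  exact pow_le_pow_left₀ h0 (tanh_strictMono.monotone hy.2.le) 2

theorem tanh_half_eq (d : ℝ) : tanh (d / 2) = (1 - exp (-d)) / (1 + exp (-d)) := by
  have h : exp (-d) = exp (-(d / 2)) ^ 2 := by rw [← exp_nat_mul]; ring_nf
  have h1 : exp (d / 2) * exp (-(d / 2)) = 1 := by rw [← exp_add]; simp
  rw [tanh_eq, h, div_eq_div_iff (by positivity) (by positivity)]
  linear_combination 2 * exp (-(d / 2)) * h1

end Real

theorem tanh_le_tanh_add {r s t : ℝ} (hr : 0 ≤ r) (hs : 0 ≤ s) (ht : 0 ≤ t)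
    (hts : t - s ≤ r) :
    tanh s ≤ tanh t + (s - t) + r * t := by
  rcases le_total t s with hts' | hst
  · have := monotone_id_sub_tanh hts'
    simp only at this
    nlinarith
  · have h1 := sub_tanh_sub_sub_tanh_le hs hst
    have h2 : tanh t ^ 2 ≤ t := by
      nlinarith [tanh_lt_one t, tanh_le_self ht, tanh_nonneg ht]
    nlinarith

theorem Fin.sum_succ_sub_castSucc {M : Type*} [AddCommGroup M] {n : ℕ} (f : Fin (n + 1) → M) :
    ∑ i : Fin n, (f i.succ - f i.castSucc) = f (Fin.last n) - f 0 := by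
  induction n with
  | zero => simp
  | succ n ih =>
    rw [Fin.sum_univ_castSucc]
    simp only [Fin.succ_castSucc]
    rw [ih fun i => f i.castSucc, Fin.castSucc_zero, Fin.succ_last]
    abel

noncomputable def tanhGapSum {n : ℕ} (x : Fin (n + 1) → ℝ) : ℝ :=
  ∑ i : Fin n, tanh ((x i.succ - x i.castSucc) / 2)

theorem tanhGapSum_cons {n : ℕ} (a : ℝ) (x : Fin (n + 1) → ℝ) :
    tanhGapSum (Fin.cons a x : Fin (n + 2) → ℝ) = tanh ((x 0 - a) / 2) + tanhGapSum x := by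
  simp [tanhGapSum, Fin.sum_univ_succ]

theorem tanhGapSum_le_add {n : ℕ} {x y : Fin (n + 1) → ℝ} {r : ℝ} (hx : Monotone x)
    (hy : Monotone y) (hr : 0 ≤ r) (hxy : ∀ i, |x i - y i| ≤ r) :
    tanhGapSum x ≤ tanhGapSum y + r * (1 + (y (Fin.last n) - y 0) / 2) := by
  have hstep : ∀ i : Fin n, tanh ((x i.succ - x i.castSucc) / 2) ≤
      tanh ((y i.succ - y i.castSucc) / 2) +
        ((x i.succ - y i.succ) / 2 - (x i.castSucc - y i.castSucc) / 2) +
        r * (y i.succ / 2 - y i.castSucc / 2) := by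
    intro i
    have h1 := (abs_le.1 (hxy i.succ)).1
    have h2 := (abs_le.1 (hxy i.castSucc)).2
    have := tanh_le_tanh_add (s := (x i.succ - x i.castSucc) / 2)
      (t := (y i.succ - y i.castSucc) / 2) hr (by linarith [hx (Fin.castSucc_le_succ i)])
      (by linarith [hy (Fin.castSucc_le_succ i)]) (by linarith)
    linarith
  have hdrift := (abs_le.1 (hxy (Fin.last n))).2
  have hstart := (abs_le.1 (hxy 0)).1
  calc tanhGapSum x
      ≤ ∑ i : Fin n, (tanh ((y i.succ - y i.castSucc) / 2) +
          ((x i.succ - y i.succ) / 2 - (x i.castSucc - y i.castSucc) / 2) +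
          r * (y i.succ / 2 - y i.castSucc / 2)) := Finset.sum_le_sum fun i _ => hstep i
    _ = tanhGapSum y + ((x (Fin.last n) - y (Fin.last n)) / 2 - (x 0 - y 0) / 2) +
          r * (y (Fin.last n) / 2 - y 0 / 2) := by
      rw [Finset.sum_add_distrib, Finset.sum_add_distrib, ← Finset.mul_sum,
        Fin.sum_succ_sub_castSucc fun i => (x i - y i) / 2,
        Fin.sum_succ_sub_castSucc fun i => y i / 2, tanhGapSum]
    _ ≤ tanhGapSum y + r * (1 + (y (Fin.last n) - y 0) / 2) := by linarith

theorem Monotone.exists_strictMono_tanhGapSum_eq {n : ℕ} {y : Fin (n + 1) → ℝ}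
    (hy : Monotone y) : ∃ (m : ℕ) (z : Fin (m + 1) → ℝ), StrictMono z ∧
      Set.range z = Set.range y ∧ z 0 = y 0 ∧ tanhGapSum z = tanhGapSum y := by
  induction n with
  | zero => exact ⟨0, y, Fin.strictMono_iff_lt_succ.2 fun i => i.elim0, rfl, rfl, rfl⟩
  | succ n ih =>
    rw [← Fin.cons_self_tail y] at hy ⊢
    obtain ⟨ha, htail⟩ := monotone_vecCons.1 hy
    obtain ⟨m, z, hz, hrange, hz0, hgap⟩ := ih htail
    rcases ha.eq_or_lt with heq | hlt
    · refine ⟨m, z, hz, ?_, by rw [hz0, ← heq]; rfl, ?_⟩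
      · rw [Fin.range_cons, hrange, heq]
        exact (Set.insert_eq_of_mem (Set.mem_range_self 0)).symm
      · rw [tanhGapSum_cons, ← heq, sub_self, zero_div, tanh_zero, zero_add, hgap]
    · refine ⟨m + 1, Fin.cons (y 0) z, Fin.strictMono_cons.2 ⟨fun j => ?_, hz⟩, ?_, rfl,
        ?_⟩
      · exact hlt.trans_le (hz0 ▸ hz.monotone (Fin.zero_le j))
      · rw [Fin.range_cons, Fin.range_cons, hrange]
      · rw [tanhGapSum_cons, tanhGapSum_cons, hz0, hgap]

open Matrix

noncomputable def expDistMatrix {ι : Type*} (x : ι → ℝ) : Matrix ι ι ℝ :=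
  Matrix.of fun i j => exp (-|x i - x j|)

theorem expDistMatrix_apply_self {ι : Type*} (x : ι → ℝ) (i : ι) :
    expDistMatrix x i i = 1 := by
  simp [expDistMatrix]

theorem expDistMatrix_comm {ι : Type*} (x : ι → ℝ) (i j : ι) :
    expDistMatrix x i j = expDistMatrix x j i := by
  simp [expDistMatrix, abs_sub_comm]

section Cons

variable {n : ℕ} {a : ℝ} {y : Fin (n + 1) → ℝ}

theorem expDistMatrix_cons_succ_succ (i j : Fin (n + 1)) :
    expDistMatrix (Fin.cons a y : Fin (n + 2) → ℝ) i.succ j.succ = expDistMatrix y i j := by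
  simp [expDistMatrix]

theorem expDistMatrix_cons_zero_succ (ha : a ≤ y 0) (hy : Monotone y) (j : Fin (n + 1)) :
    expDistMatrix (Fin.cons a y : Fin (n + 2) → ℝ) 0 j.succ =
      exp (a - y 0) * expDistMatrix y 0 j := by
  have h0j := hy (Fin.zero_le j)
  simp only [expDistMatrix, of_apply, Fin.cons_zero, Fin.cons_succ]
  rw [abs_of_nonpos (by linarith), abs_of_nonpos (by linarith), ← exp_add]
  ring_nf

theorem expDistMatrix_cons_succ_zero (ha : a ≤ y 0) (hy : Monotone y) (i : Fin (n + 1)) :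
    expDistMatrix (Fin.cons a y : Fin (n + 2) → ℝ) i.succ 0 =
      exp (a - y 0) * expDistMatrix y i 0 := by
  rw [expDistMatrix_comm, expDistMatrix_cons_zero_succ ha hy, expDistMatrix_comm y]

theorem det_expDistMatrix_cons (ha : a ≤ y 0) (hy : Monotone y) :
    (expDistMatrix (Fin.cons a y : Fin (n + 2) → ℝ)).det =
      (1 - exp (a - y 0) ^ 2) * (expDistMatrix y).det := by
  set u := exp (a - y 0)
  set K := expDistMatrix (Fin.cons a y : Fin (n + 2) → ℝ) with hK
  -- subtracting `u` times row `1` from row `0` clears row `0` except for its first entry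
  rw [← det_updateRow_add_smul_self K (i := 0) (j := 1) (by simp) (-u), det_succ_row_zero,
    Fin.sum_univ_succ]
  have hrow : ∀ j : Fin (n + 1), (K 0 + -u • K 1) j.succ = 0 := by
    intro j
    rw [hK, Pi.add_apply, Pi.smul_apply, smul_eq_mul, ← Fin.succ_zero_eq_one,
      expDistMatrix_cons_zero_succ ha hy, expDistMatrix_cons_succ_succ]
    ring
  simp only [updateRow_self, hrow, mul_zero, zero_mul, Finset.sum_const_zero, add_zero]
  have hsub : (K.updateRow 0 (K 0 + -u • K 1)).submatrix Fin.succ (Fin.succAbove 0) =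
      expDistMatrix y := by
    ext i j
    simp [K, expDistMatrix_cons_succ_succ]
  rw [hsub, hK, Pi.add_apply, Pi.smul_apply, smul_eq_mul, ← Fin.succ_zero_eq_one,
    expDistMatrix_cons_succ_zero ha hy, expDistMatrix_apply_self, expDistMatrix_apply_self]
  simp only [Fin.val_zero, pow_zero, one_mul]
  ring

end Cons

theorem det_expDistMatrix_ne_zero {n : ℕ} {x : Fin (n + 1) → ℝ} (hx : StrictMono x) :
    (expDistMatrix x).det ≠ 0 := by
  induction n with
  | zero => simp [det_unique, expDistMatrix_apply_self]
  | succ n ih =>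
    rw [← Fin.cons_self_tail x] at hx ⊢
    obtain ⟨hlt, htail⟩ := Fin.strictMono_cons.1 hx
    rw [det_expDistMatrix_cons (hlt 0).le htail.monotone]
    have hu : exp (x 0 - Fin.tail x 0) < 1 := exp_lt_one_iff.2 (by linarith [hlt 0])
    exact mul_ne_zero (by nlinarith [exp_pos (x 0 - Fin.tail x 0)]) (ih htail)

/-- The weighting of `Fin.cons a y` is that of `y`, plus `1 / (1 + u)` at `a` and minus
`u / (1 + u)` at `y 0`, where `u = exp (a - y 0)`. -/
theorem exists_expDistMatrix_mulVec_eq_one {n : ℕ} {x : Fin (n + 1) → ℝ} (hx : Monotone x) :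
    ∃ w, expDistMatrix x *ᵥ w = 1 ∧ ∑ i, w i = 1 + tanhGapSum x := by
  induction n with
  | zero =>
    refine ⟨1, ?_, by simp [tanhGapSum]⟩
    ext i
    fin_cases i
    simp [mulVec, dotProduct, expDistMatrix_apply_self]
  | succ n ih =>
    rw [← Fin.cons_self_tail x] at hx ⊢
    set a := x 0
    set y := Fin.tail x
    obtain ⟨ha, hy⟩ := monotone_vecCons.1 hx
    obtain ⟨w, hw, hsum⟩ := ih hy
    set u := exp (a - y 0)
    have hu : 0 < 1 + u := by positivity
    refine ⟨vecCons (1 / (1 + u)) (w - Pi.single 0 (u / (1 + u))), ?_, ?_⟩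
    · have hw' : ∀ i, (fun j => expDistMatrix y i j) ⬝ᵥ w = 1 := fun i => congrFun hw i
      ext i
      refine Fin.cases ?_ (fun i => ?_) i
      · have hrow : (fun j => expDistMatrix (Fin.cons a y : Fin (n + 2) → ℝ) 0 j.succ) =
            u • fun j => expDistMatrix y 0 j :=
          funext fun j => expDistMatrix_cons_zero_succ ha hy j
        rw [mulVec, dotProduct_cons]
        simp only [vecHead, vecTail, Function.comp_def]
        rw [hrow, smul_dotProduct, dotProduct_sub, dotProduct_single, hw' 0,
          expDistMatrix_apply_self, expDistMatrix_apply_self, Pi.one_apply, smul_eq_mul]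
        field_simp
        ring
      · have hrow : (fun j => expDistMatrix (Fin.cons a y : Fin (n + 2) → ℝ) i.succ j.succ) =
            fun j => expDistMatrix y i j :=
          funext fun j => expDistMatrix_cons_succ_succ i j
        rw [mulVec, dotProduct_cons]
        simp only [vecHead, vecTail, Function.comp_def]
        rw [hrow, dotProduct_sub, dotProduct_single, hw' i, expDistMatrix_cons_succ_zero ha hy,
          Pi.one_apply]
        field_simp
        ring
    · rw [Fin.sum_univ_succ]
      simp only [cons_val_zero, cons_val_succ, Pi.sub_apply, Finset.sum_sub_distrib,
        Finset.sum_pi_single', Finset.mem_univ, if_true, hsum, tanhGapSum_cons, tanh_half_eq]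
      rw [neg_sub]
      field_simp
      ring

section Magnitude

variable {X : Type*} [MetricSpace X]

theorem finMag_eq_sum_of_mulVec_eq_one [DecidableEq X] {s : Finset X} {w : s → ℝ}
    (hdet : (simMatrix s).det ≠ 0) (hw : simMatrix s *ᵥ w = 1) :
    finMag s = ∑ i, w i := by
  have hinv : (simMatrix s)⁻¹ *ᵥ 1 = w := by
    rw [← hw, mulVec_mulVec, nonsing_inv_mul _ (isUnit_iff_ne_zero.2 hdet), one_mulVec]
  rw [← hinv, finMag]
  simp only [mulVec, dotProduct, Pi.one_apply, mul_one]
  congr!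

theorem finMag_empty : finMag (∅ : Finset X) = 0 := by
  simp [finMag]

theorem cMagE_coe_finset_ne_top (A : Finset X) : cMagE (A : Set X) ≠ ⊤ := by
  refine ne_top_of_le_ne_top (b := ∑ s ∈ A.powerset, ENNReal.ofReal (finMag s))
    (ENNReal.sum_ne_top.2 fun s _ => ENNReal.ofReal_ne_top)
    (iSup₂_le fun s hs => ?_)
  exact Finset.single_le_sum (f := fun s => ENNReal.ofReal (finMag s)) (fun _ _ => zero_le)
    (Finset.mem_powerset.2 (Finset.coe_subset.1 hs))

theorem finMag_le_cMag {K : Set X} (hK : cMagE K ≠ ⊤) {s : Finset X} (hs : (s : Set X) ⊆ K) :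
    finMag s ≤ cMag K :=
  (ENNReal.ofReal_le_iff_le_toReal hK).1
    (le_iSup₂ (f := fun (s : Finset X) (_ : (s : Set X) ⊆ K) => ENNReal.ofReal (finMag s)) s hs)

theorem cMag_le_of_forall_finMag_le {K : Set X} {c : ℝ}
    (h : ∀ s : Finset X, (s : Set X) ⊆ K → finMag s ≤ c) : cMag K ≤ c := by
  have hc : 0 ≤ c := finMag_empty (X := X) ▸ h ∅ (by simp)
  exact ENNReal.toReal_le_of_le_ofReal hc
    (iSup₂_le fun s hs => ENNReal.ofReal_le_ofReal (h s hs))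

end Magnitude

theorem finMag_eq_one_add_tanhGapSum_of_strictMono {n : ℕ} {x : Fin (n + 1) → ℝ}
    (hx : StrictMono x) {s : Finset ℝ} (hs : (s : Set ℝ) = Set.range x) :
    finMag s = 1 + tanhGapSum x := by
  have hmem : ∀ i, x i ∈ s := fun i => by rw [← Finset.mem_coe, hs]; exact ⟨i, rfl⟩
  let e : Fin (n + 1) ≃ s := Equiv.ofBijective (fun i => ⟨x i, hmem i⟩)
    ⟨fun i j h => hx.injective (congrArg Subtype.val h), fun z => by
      obtain ⟨i, hi⟩ : (z : ℝ) ∈ Set.range x := hs ▸ z.2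
      exact ⟨i, Subtype.ext hi⟩⟩
  have hK : simMatrix s = (expDistMatrix x).submatrix e.symm e.symm := by
    ext i j
    have hx_e : ∀ k, x (e.symm k) = k := fun k => congrArg Subtype.val (e.apply_symm_apply k)
    simp [simMatrix, expDistMatrix, Real.dist_eq, hx_e]
  obtain ⟨w, hw, hsum⟩ := exists_expDistMatrix_mulVec_eq_one hx.monotone
  rw [finMag_eq_sum_of_mulVec_eq_one (w := w ∘ e.symm), ← hsum]
  · exact e.symm.sum_comp w
  · rw [hK, det_submatrix_equiv_self]
    exact det_expDistMatrix_ne_zero hx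
  · rw [hK, submatrix_mulVec_equiv, Equiv.symm_symm, Function.comp_assoc, e.symm_comp_self,
      Function.comp_id, hw]
    rfl

theorem finMag_eq_one_add_tanhGapSum {n : ℕ} {x : Fin (n + 1) → ℝ} (hx : Monotone x)
    {s : Finset ℝ} (hs : (s : Set ℝ) = Set.range x) : finMag s = 1 + tanhGapSum x := by
  obtain ⟨m, z, hz, hrange, -, hgap⟩ := hx.exists_strictMono_tanhGapSum_eq
  rw [finMag_eq_one_add_tanhGapSum_of_strictMono hz (hs.trans hrange.symm), hgap]

theorem Finset.exists_monotone_near {A : Finset ℝ} (hA : A.Nonempty) (r : ℝ) :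
    ∃ p : ℝ → ℝ, Monotone p ∧ (∀ z, p z ∈ A) ∧
      ∀ z, infDist z (A : Set ℝ) ≤ r → |z - p z| ≤ r := by
  classical
  -- `min A` is inserted only to make `max'` total
  let p z := (insert (A.min' hA) (A.filter (· ≤ z + r))).max' (Finset.insert_nonempty _ _)
  refine ⟨p, fun z z' hzz' => ?_, fun z => ?_, fun z hz => ?_⟩
  · refine Finset.max'_subset _ (Finset.insert_subset_insert _ ?_)
    exact Finset.monotone_filter_right _ fun a _ (ha : a ≤ z + r) => (by linarith : a ≤ z' + r)
  · rcases Finset.mem_insert.1 (Finset.max'_mem (insert (A.min' hA) (A.filter (· ≤ z + r)))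
      (Finset.insert_nonempty _ _)) with h | h
    · rw [show p z = A.min' hA from h]
      exact A.min'_mem hA
    · exact (Finset.mem_filter.1 h).1
  · obtain ⟨a, haA, ha⟩ :=
      A.finite_toSet.isCompact.exists_infDist_eq_dist (Finset.coe_nonempty.2 hA) z
    rw [ha, Real.dist_eq, abs_le] at hz
    have ha_le : a ≤ p z := Finset.le_max' _ a
      (Finset.mem_insert_of_mem (Finset.mem_filter.2 ⟨haA, by linarith⟩))
    have hp_le : p z ≤ z + r := Finset.max'_le _ _ _ fun b hb => by
      rcases Finset.mem_insert.1 hb with rfl | hb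
      · linarith [A.min'_le a haA]
      · exact (Finset.mem_filter.1 hb).2
    rw [abs_le]
    constructor <;> linarith

theorem finMag_le_of_subset_thickening {A : Finset ℝ} (hA : A.Nonempty) {r : ℝ} (hr : 0 ≤ r)
    {F : Finset ℝ} (hF : (F : Set ℝ) ⊆ {x | infDist x (A : Set ℝ) ≤ r}) :
    finMag F ≤ cMag (A : Set ℝ) + r * (1 + (A.max' hA - A.min' hA) / 2) := by
  have hspread : A.min' hA ≤ A.max' hA := A.min'_le_max' hA
  rcases F.eq_empty_or_nonempty with rfl | hFne
  · rw [finMag_empty]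
    have : 0 ≤ cMag (A : Set ℝ) := ENNReal.toReal_nonneg
    have : 0 ≤ r * (1 + (A.max' hA - A.min' hA) / 2) := mul_nonneg hr (by linarith)
    linarith
  obtain ⟨n, hn⟩ : ∃ n, F.card = n + 1 := ⟨F.card - 1, by have := hFne.card_pos; omega⟩
  let x := F.orderEmbOfFin hn
  obtain ⟨p, hp, hpA, hp_near⟩ := A.exists_monotone_near hA r
  have hmagF : finMag F = 1 + tanhGapSum x :=
    finMag_eq_one_add_tanhGapSum x.monotone (F.range_orderEmbOfFin hn).symm
  have hmagA : 1 + tanhGapSum (p ∘ x) ≤ cMag (A : Set ℝ) := by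
    rw [← finMag_eq_one_add_tanhGapSum (hp.comp x.monotone) (s := Finset.univ.image (p ∘ x))
      (by rw [Finset.coe_image, Finset.coe_univ, Set.image_univ])]
    refine finMag_le_cMag (cMagE_coe_finset_ne_top A) ?_
    simp [Set.subset_def, hpA]
  have hgap := tanhGapSum_le_add x.monotone (hp.comp x.monotone) hr
    fun i => hp_near _ (hF (F.orderEmbOfFin_mem hn i))
  have hspan : p (x (Fin.last n)) - p (x 0) ≤ A.max' hA - A.min' hA :=
    sub_le_sub (A.le_max' _ (hpA _)) (A.min'_le _ (hpA _))
  calc finMag F ≤ 1 + tanhGapSum (p ∘ x) + r * (1 + (p (x (Fin.last n)) - p (x 0)) / 2) := by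
        rw [hmagF]; simpa [add_assoc] using hgap
    _ ≤ cMag (A : Set ℝ) + r * (1 + (A.max' hA - A.min' hA) / 2) := by gcongr

/-- For a nonempty finite `A ⊆ ℝ` and `r ≥ 0`, the magnitude of the closed
`r`-thickening of `A` exceeds that of `A` by at most `r · (1 + (max A − min A)/2)`. -/
theorem stmt_18 (A : Finset ℝ) (hA : A.Nonempty) (r : ℝ) (hr : 0 ≤ r) :
    cMag {x : ℝ | infDist x (A : Set ℝ) ≤ r} - cMag (A : Set ℝ) ≤
      r * (1 + (A.max' hA - A.min' hA) / 2) := by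
  have := cMag_le_of_forall_finMag_le fun F hF => finMag_le_of_subset_thickening hA hr hF
  linarith
end
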